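/- arXiv:1410.6976 — 7 statements merged into one kernel-verified Lean document; each statement's English description precedes it below -/
import Mathlib

section
/- The distance-based influence function is submodular: for any seed sets S ⊆ T ⊆ V and any node u ∈ V, the marginal gain satisfies Inf(S ∪ {u}) − Inf(S) ≥ Inf(T ∪ {u}) − Inf(T). -/
open scoped ENNReal BigOperators

/-- The distance-based influence function is submodular:
for any seed sets `S ⊆ T ⊆ V` and any node `u`, the marginal gain satisfies
`Inf(S ∪ {u}) − Inf(S) ≥ Inf(T ∪ {u}) − Inf(T)`. -/
theorem distance_based_influence_submodular
    {V : Type*} [Fintype V] [DecidableEq V]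
    (ℓ : ℕ) (hℓ : 1 ≤ ℓ)
    (d : Fin ℓ → V → V → ℝ≥0∞)
    (α : ℝ≥0∞ → ℝ) (hα_anti : Antitone α) (hα_top : α ⊤ = 0)
    (hα_nonneg : ∀ x, 0 ≤ α x)
    (Inf : Finset V → ℝ)
    (hInf : ∀ S : Finset V,
      Inf S = (1 / (ℓ : ℝ)) * ∑ i : Fin ℓ, ∑ v : V, α (S.inf fun u => d i u v))
    (S T : Finset V) (hST : S ⊆ T) (u : V) :
    Inf (T ∪ {u}) - Inf T ≤ Inf (S ∪ {u}) - Inf S := by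
  have key : ∀ (a b c : ℝ≥0∞), b ≤ a → α (b ⊓ c) + α a ≤ α (a ⊓ c) + α b := by
    intro a b c hba
    rcases le_total b c with h | h
    · rw [inf_eq_left.mpr h]
      linarith [hα_anti (inf_le_left : a ⊓ c ≤ a), hα_anti hba]
    · rw [inf_eq_right.mpr h, inf_eq_right.mpr (h.trans hba)]
      linarith [hα_anti hba]
  rw [hInf, hInf, hInf, hInf, sub_le_sub_iff, ← mul_add, ← mul_add,
    ← Finset.sum_add_distrib, ← Finset.sum_add_distrib]
  apply mul_le_mul_of_nonneg_left _ (by positivity)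
  refine Finset.sum_le_sum fun i _ => ?_
  rw [← Finset.sum_add_distrib, ← Finset.sum_add_distrib]
  refine Finset.sum_le_sum fun v _ => ?_
  have h1 : ((T ∪ {u}).inf fun w => d i w v) = (T.inf fun w => d i w v) ⊓ d i u v := by
    rw [Finset.inf_union, Finset.inf_singleton]
  have h2 : ((S ∪ {u}).inf fun w => d i w v) = (S.inf fun w => d i w v) ⊓ d i u v := by
    rw [Finset.inf_union, Finset.inf_singleton]
  rw [h1, h2]
  exact key _ _ _ (Finset.inf_mono hST)
end

section
/- Greedy approximation guarantee for every prefix: if g₁, g₂, … is a greedy sequence for a monotone submodular set function f with f(∅) = 0, i.e., each g_{j+1} maximizes the marginal gain f(G_j ∪ {u}) − f(G_j) over all u ∈ V, where G_j = {g₁,…,g_j}, then for every integer s ≥ 1 and every set U ⊆ V with |U| = s, f(G_s) ≥ (1 − (1 − 1/s)^s) · f(U). -/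
open scoped BigOperators

lemma greedy_sum_marginal {V : Type*} [DecidableEq V]
    (f : Finset V → ℝ)
    (h_submod : ∀ S T : Finset V, S ⊆ T → ∀ u : V,
      f (insert u T) - f T ≤ f (insert u S) - f S)
    (S T : Finset V) :
    f (S ∪ T) ≤ f S + ∑ u ∈ T, (f (insert u S) - f S) := by
  classical
  induction T using Finset.induction_on with
  | empty => simp
  | @insert a T ha ih =>
    have h1 : S ∪ insert a T = insert a (S ∪ T) := by
      ext x; simp [or_comm, or_left_comm]
    have h2 := h_submod S (S ∪ T) Finset.subset_union_left a
    rw [h1, Finset.sum_insert ha]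
    linarith

/-- Greedy approximation guarantee for every prefix: if
`g₁, g₂, …` is a greedy sequence for a monotone submodular set function `f`
with `f(∅) = 0`, i.e., each `g_{j+1}` maximizes the marginal gain
`f(G_j ∪ {u}) − f(G_j)` over all `u ∈ V`, where `G_j = {g₁, …, g_j}`,
then for every integer `s ≥ 1` and every set `U` with `|U| = s`,
`f(G_s) ≥ (1 − (1 − 1/s)^s) · f(U)`. -/
theorem greedy_prefix_approximation
    {V : Type*} [Fintype V] [DecidableEq V]
    (f : Finset V → ℝ)
    (h_empty : f ∅ = 0)
    (h_mono : ∀ S T : Finset V, S ⊆ T → f S ≤ f T)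
    (h_submod : ∀ S T : Finset V, S ⊆ T → ∀ u : V,
      f (insert u T) - f T ≤ f (insert u S) - f S)
    (g : ℕ → V)
    (G : ℕ → Finset V) (hG : ∀ j, G j = (Finset.range j).image g)
    (h_greedy : ∀ j, ∀ u : V,
      f (insert u (G j)) - f (G j) ≤ f (insert (g j) (G j)) - f (G j))
    (s : ℕ) (hs : 1 ≤ s) (U : Finset V) (hU : U.card = s) :
    (1 - (1 - 1 / (s : ℝ)) ^ s) * f U ≤ f (G s) := by
  have hs0 : (0 : ℝ) < s := by exact_mod_cast hs
  have hsr : (0 : ℝ) ≤ 1 - 1 / (s : ℝ) := by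
    rw [sub_nonneg]
    rw [div_le_one hs0]
    exact_mod_cast hs
  have hGsucc : ∀ j, G (j + 1) = insert (g j) (G j) := by
    intro j
    rw [hG, hG, Finset.range_add_one, Finset.image_insert]
  -- marginal gain is nonnegative
  have hUne : U.Nonempty := Finset.card_pos.mp (by omega)
  obtain ⟨u0, hu0⟩ := hUne
  have hΔ : ∀ j, 0 ≤ f (G (j + 1)) - f (G j) := by
    intro j
    have h1 : f (G j) ≤ f (insert u0 (G j)) :=
      h_mono _ _ (Finset.subset_insert _ _)
    have h2 := h_greedy j u0
    rw [hGsucc]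
    linarith
  -- key bound each step
  have key : ∀ j, f U ≤ f (G j) + (s : ℝ) * (f (G (j + 1)) - f (G j)) := by
    intro j
    have h1 : f U ≤ f (G j ∪ U) := h_mono _ _ Finset.subset_union_right
    have h2 := greedy_sum_marginal f h_submod (G j) U
    have h3 : ∑ u ∈ U, (f (insert u (G j)) - f (G j)) ≤
        ∑ _u ∈ U, (f (G (j + 1)) - f (G j)) := by
      apply Finset.sum_le_sum
      intro u hu
      rw [hGsucc]
      exact h_greedy j u
    rw [Finset.sum_const, hU, nsmul_eq_mul] at h3
    linarith
  -- inductive bound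
  have main : ∀ j, f U - f (G j) ≤ (1 - 1 / (s : ℝ)) ^ j * f U := by
    intro j
    induction j with
    | zero =>
      have : G 0 = ∅ := by rw [hG]; simp
      rw [this, h_empty]
      simp
    | succ j ih =>
      have hk := key j
      have hstep : f U - f (G (j + 1)) ≤ (1 - 1 / (s : ℝ)) * (f U - f (G j)) := by
        have : (1 - 1 / (s : ℝ)) * (f U - f (G j)) =
            (f U - f (G j)) - (f U - f (G j)) / s := by ring
        rw [this]
        have : (f U - f (G j)) / s ≤ f (G (j + 1)) - f (G j) := by
          rw [div_le_iff₀ hs0]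
          nlinarith [hΔ j]
        linarith
      calc f U - f (G (j + 1)) ≤ (1 - 1 / (s : ℝ)) * (f U - f (G j)) := hstep
        _ ≤ (1 - 1 / (s : ℝ)) * ((1 - 1 / (s : ℝ)) ^ j * f U) :=
            mul_le_mul_of_nonneg_left ih hsr
        _ = (1 - 1 / (s : ℝ)) ^ (j + 1) * f U := by ring
  have := main s
  linarith
end

section
/- Approximate greedy guarantee: let 0 ≤ ε < 1 and let g₁, g₂, … be a sequence such that each g_{j+1} satisfies f(G_j ∪ {g_{j+1}}) − f(G_j) ≥ (1 − ε) · max_{u∈V} ( f(G_j ∪ {u}) − f(G_j) ), where G_j = {g₁,…,g_j}. Then for every integer s ≥ 1 and every set U ⊆ V with |U| = s, f(G_s) ≥ (1 − (1 − (1−ε)/s)^s) · f(U); in particular f(G_s) ≥ (1 − (1 − 1/s)^s − ε) · f(U). -/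
open scoped BigOperators

lemma submod_sum_bound' {V : Type*} [DecidableEq V] (f : Finset V → ℝ)
    (h_submod : ∀ S T : Finset V, S ⊆ T → ∀ u : V,
      f (insert u T) - f T ≤ f (insert u S) - f S)
    (S U : Finset V) :
    f (S ∪ U) ≤ f S + ∑ u ∈ U, (f (insert u S) - f S) := by
  induction U using Finset.induction with
  | empty => simp
  | @insert x T hx ih =>
    rw [Finset.union_insert, Finset.sum_insert hx]
    have h := h_submod S (S ∪ T) Finset.subset_union_left x
    linarith

lemma pow_sub_pow_le_of_le_one (a b : ℝ) (ha : 0 ≤ a) (hab : a ≤ b) (hb : b ≤ 1) :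
    ∀ n : ℕ, b ^ n - a ^ n ≤ n * (b - a) := by
  intro n
  induction n with
  | zero => simp
  | succ n ih =>
    have hbn : b ^ n ≤ 1 := pow_le_one₀ (ha.trans hab) hb
    have han : a ^ n ≤ 1 := pow_le_one₀ ha (hab.trans hb)
    have h1 : 0 ≤ a ^ n := pow_nonneg ha n
    have h2 : a ^ n ≤ b ^ n := pow_le_pow_left₀ ha hab n
    have : b ^ (n+1) - a ^ (n+1) = b * (b ^ n - a ^ n) + (b - a) * a ^ n := by ring
    rw [this]
    have hb0 : 0 ≤ b := ha.trans hab
    have : b * (b ^ n - a ^ n) ≤ 1 * (b ^ n - a ^ n) := by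
      apply mul_le_mul_of_nonneg_right hb (by linarith)
    have : (b - a) * a ^ n ≤ (b - a) * 1 := by
      apply mul_le_mul_of_nonneg_left han (by linarith)
    push_cast
    nlinarith

/-- Approximate greedy guarantee: let `0 ≤ ε < 1` and let
`g₁, g₂, …` be a sequence such that each `g_{j+1}` satisfies
`f(G_j ∪ {g_{j+1}}) − f(G_j) ≥ (1 − ε) · max_{u ∈ V} (f(G_j ∪ {u}) − f(G_j))`,
where `G_j = {g₁, …, g_j}`. Then for every integer `s ≥ 1` and every set
`U` with `|U| = s`, `f(G_s) ≥ (1 − (1 − (1−ε)/s)^s) · f(U)`; in particular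
`f(G_s) ≥ (1 − (1 − 1/s)^s − ε) · f(U)`. -/
theorem approximate_greedy_prefix_approximation
    {V : Type*} [Fintype V] [DecidableEq V]
    (f : Finset V → ℝ)
    (h_empty : f ∅ = 0)
    (h_mono : ∀ S T : Finset V, S ⊆ T → f S ≤ f T)
    (h_submod : ∀ S T : Finset V, S ⊆ T → ∀ u : V,
      f (insert u T) - f T ≤ f (insert u S) - f S)
    (ε : ℝ) (hε0 : 0 ≤ ε) (hε1 : ε < 1)
    (g : ℕ → V)
    (G : ℕ → Finset V) (hG : ∀ j, G j = (Finset.range j).image g)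
    (h_approx_greedy : ∀ j, ∀ u : V,
      (1 - ε) * (f (insert u (G j)) - f (G j))
        ≤ f (insert (g j) (G j)) - f (G j))
    (s : ℕ) (hs : 1 ≤ s) (U : Finset V) (hU : U.card = s) :
    (1 - (1 - (1 - ε) / (s : ℝ)) ^ s) * f U ≤ f (G s)
      ∧ (1 - (1 - 1 / (s : ℝ)) ^ s - ε) * f U ≤ f (G s) := by
  have hs1 : (1 : ℝ) ≤ (s : ℝ) := by exact_mod_cast hs
  have hspos : (0 : ℝ) < (s : ℝ) := by linarith
  set c : ℝ := 1 - (1 - ε) / (s : ℝ) with hc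
  have hc0 : 0 ≤ c := by
    have h : (1 - ε) / (s : ℝ) ≤ 1 := by
      rw [div_le_one hspos]; linarith
    rw [hc]; linarith
  have hc1 : c ≤ 1 := by
    have : 0 ≤ (1 - ε) / (s : ℝ) := div_nonneg (by linarith) hspos.le
    simp [hc]; linarith
  have hGsucc : ∀ j, G (j+1) = insert (g j) (G j) := by
    intro j
    rw [hG, hG, Finset.range_add_one, Finset.image_insert]
  have hG0 : G 0 = ∅ := by rw [hG]; simp
  have hfU : 0 ≤ f U := by
    have := h_mono ∅ U (Finset.empty_subset U)
    linarith
  -- key step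
  have key : ∀ j, f U - f (G (j+1)) ≤ c * (f U - f (G j)) := by
    intro j
    have h1 : f U ≤ f (G j ∪ U) := h_mono U _ Finset.subset_union_right
    have h2 := submod_sum_bound' f h_submod (G j) U
    have h3 : ∀ u ∈ U, (1 - ε) * (f (insert u (G j)) - f (G j))
        ≤ f (G (j+1)) - f (G j) := by
      intro u _
      rw [hGsucc]
      exact h_approx_greedy j u
    have hdelta : 0 ≤ f (G (j+1)) - f (G j) := by
      rw [hGsucc]
      have := h_mono (G j) (insert (g j) (G j)) (Finset.subset_insert _ _)
      linarith
    have h4 : (1 - ε) * ∑ u ∈ U, (f (insert u (G j)) - f (G j))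
        ≤ (s : ℝ) * (f (G (j+1)) - f (G j)) := by
      rw [Finset.mul_sum]
      calc ∑ u ∈ U, (1 - ε) * (f (insert u (G j)) - f (G j))
          ≤ ∑ u ∈ U, (f (G (j+1)) - f (G j)) := Finset.sum_le_sum h3
        _ = (s : ℝ) * (f (G (j+1)) - f (G j)) := by
            rw [Finset.sum_const, hU]; push_cast; ring
    -- (1-ε)(f U - f(G j)) ≤ s * Δ
    have h5 : (1 - ε) * (f U - f (G j)) ≤ (s : ℝ) * (f (G (j+1)) - f (G j)) := by
      have : (1 - ε) * (f U - f (G j)) ≤ (1 - ε) * ∑ u ∈ U, (f (insert u (G j)) - f (G j)) := by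
        apply mul_le_mul_of_nonneg_left _ (by linarith)
        linarith
      linarith
    have : c * (f U - f (G j)) = (f U - f (G j)) - ((1 - ε) / (s : ℝ)) * (f U - f (G j)) := by
      ring
    rw [this]
    have h6 : ((1 - ε) / (s : ℝ)) * (f U - f (G j)) ≤ f (G (j+1)) - f (G j) := by
      rw [div_mul_eq_mul_div, div_le_iff₀ hspos]
      linarith [h5]
    linarith
  have main : ∀ n, f U - f (G n) ≤ c ^ n * f U := by
    intro n
    induction n with
    | zero => simp [hG0, h_empty]
    | succ n ih =>
      calc f U - f (G (n+1)) ≤ c * (f U - f (G n)) := key n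
        _ ≤ c * (c ^ n * f U) := mul_le_mul_of_nonneg_left ih hc0
        _ = c ^ (n+1) * f U := by ring
  have first : (1 - c ^ s) * f U ≤ f (G s) := by
    have := main s; nlinarith
  refine ⟨first, ?_⟩
  -- second part
  set a : ℝ := 1 - 1 / (s : ℝ) with ha
  have ha0 : 0 ≤ a := by
    have h : 1 / (s : ℝ) ≤ 1 := by rw [div_le_one hspos]; linarith
    rw [ha]; linarith
  have hab : a ≤ c := by
    rw [ha, hc]
    have h : (1 - ε) / (s : ℝ) ≤ 1 / (s : ℝ) := by
      gcongr; linarith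
    linarith
  have hpow : c ^ s - a ^ s ≤ ε := by
    have h := pow_sub_pow_le_of_le_one a c ha0 hab hc1 s
    have hca : c - a = ε / (s : ℝ) := by
      rw [hc, ha]; ring
    rw [hca] at h
    calc c ^ s - a ^ s ≤ (s : ℝ) * (ε / (s : ℝ)) := h
      _ = ε := by field_simp
  have : (1 - a ^ s - ε) * f U ≤ (1 - c ^ s) * f U := by
    apply mul_le_mul_of_nonneg_right _ hfU
    linarith
  linarith
end

section
/- Expected sketch size bound: let σ be a uniformly random permutation of {1,…,m} and let k be an integer with 1 ≤ k ≤ m. The expected number of indices j ∈ {1,…,m} such that σ(j) is among the k smallest values of {σ(1),…,σ(j)} equals ∑_{j=1}^m min{1, k/j}, and this quantity is at most k·(1 + ln(m/k)). -/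
/-!
Right multiplication by the transposition of two positions `x, y ∈ s` is a bijection of the
permutations exchanging the ranks of `x` and `y` within `s`. Hence every element of `s` is among
the `k` smallest of `s` with the same probability, and since exactly `min k #s` of them are, that
probability is `min 1 (k / #s)`. Taking `s` to be the prefix ending at `j` and summing over `j`
gives the expectation. In the bound, the first `k` terms are `1` and the rest are
`k / (j + 1) ≤ k ∫_j^{j+1} dx / x`, which sum to at most `k log (m / k)`.
-/

open Finset Equiv

section Rank

variable {ι β : Type*} [LinearOrder β]

/-- The `1`-based rank of `f x` among the values of `f` on `s`. -/
def rankIn (s : Finset ι) (f : ι → β) (x : ι) : ℕ := #{i ∈ s | f i ≤ f x}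

variable {s : Finset ι} {f : ι → β}

lemma rankIn_lt_rankIn {x y : ι} (hy : y ∈ s) (hxy : f x < f y) :
    rankIn s f x < rankIn s f y := by
  refine card_lt_card ⟨monotone_filter_right s fun _ _ hi => hi.trans hxy.le, fun hsub => ?_⟩
  have := hsub (mem_filter.mpr ⟨hy, le_rfl⟩)
  exact (mem_filter.mp this).2.not_gt hxy

lemma rankIn_mem_Icc {x : ι} (hx : x ∈ s) : rankIn s f x ∈ Icc 1 #s :=
  mem_Icc.mpr ⟨card_pos.mpr ⟨x, mem_filter.mpr ⟨hx, le_rfl⟩⟩, card_filter_le s _⟩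

lemma injOn_rankIn (hf : Set.InjOn f s) : Set.InjOn (rankIn s f) s := by
  intro x hx y hy hxy
  rcases lt_trichotomy (f x) (f y) with h | h | h
  · exact absurd hxy (rankIn_lt_rankIn hy h).ne
  · exact hf hx hy h
  · exact absurd hxy (rankIn_lt_rankIn hx h).ne'

lemma image_rankIn (hf : Set.InjOn f s) : s.image (rankIn s f) = Icc 1 #s :=
  eq_of_subset_of_card_le (image_subset_iff.mpr fun _ => rankIn_mem_Icc)
    (by rw [card_image_of_injOn (injOn_rankIn hf), Nat.card_Icc, Nat.add_sub_cancel])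

lemma card_filter_rankIn_le (hf : Set.InjOn f s) (k : ℕ) :
    #{x ∈ s | rankIn s f x ≤ k} = min k #s := by
  have hinj := (injOn_rankIn hf).mono (coe_subset.mpr (filter_subset (rankIn s f · ≤ k) s))
  rw [← card_image_of_injOn hinj, ← filter_image (p := (· ≤ k)), image_rankIn hf]
  have : {r ∈ Icc 1 #s | r ≤ k} = Icc 1 (min k #s) := by
    ext r; simp only [mem_filter, mem_Icc, le_min_iff]; omega
  rw [this, Nat.card_Icc, Nat.add_sub_cancel]

end Rank

lemma swap_apply_mem_iff {α : Type*} [DecidableEq α] {s : Finset α} {x y : α} (hx : x ∈ s)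
    (hy : y ∈ s) (i : α) : swap x y i ∈ s ↔ i ∈ s := by
  rcases eq_or_ne i x with rfl | hix
  · simp [hx, hy]
  rcases eq_or_ne i y with rfl | hiy
  · simp [hx, hy]
  · rw [swap_apply_of_ne_of_ne hix hiy]

section RandomPermutation

variable {α : Type*} [LinearOrder α] {s : Finset α}

lemma rankIn_mul_swap (σ : Perm α) {x y : α} (hx : x ∈ s) (hy : y ∈ s) :
    rankIn s ⇑(σ * swap x y) x = rankIn s σ y :=
  card_equiv (swap x y) fun i => by
    simp [mem_filter, swap_apply_mem_iff hx hy]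

variable [Fintype α]

lemma card_rankIn_le_eq {x y : α} (hx : x ∈ s) (hy : y ∈ s) (k : ℕ) :
    #{σ : Perm α | rankIn s σ x ≤ k} = #{σ : Perm α | rankIn s σ y ≤ k} :=
  card_equiv (Equiv.mulRight (swap y x)) fun σ => by
    simp only [mem_filter, mem_univ, true_and, coe_mulRight, rankIn_mul_swap σ hy hx]

lemma card_mul_card_rankIn_le {y : α} (hy : y ∈ s) (k : ℕ) :
    #s * #{σ : Perm α | rankIn s σ y ≤ k} = (Fintype.card α).factorial * min k #s := by
  calc #s * #{σ : Perm α | rankIn s σ y ≤ k}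
      = ∑ x ∈ s, #{σ : Perm α | rankIn s σ x ≤ k} := by
        rw [sum_congr rfl fun x hx => card_rankIn_le_eq hx hy k, sum_const, smul_eq_mul]
    _ = ∑ σ : Perm α, #{x ∈ s | rankIn s σ x ≤ k} :=
        sum_card_bipartiteAbove_eq_sum_card_bipartiteBelow _
    _ = (Fintype.card α).factorial * min k #s := by
        rw [sum_congr rfl fun σ _ => card_filter_rankIn_le σ.injective.injOn k, sum_const,
          card_univ, Fintype.card_perm, smul_eq_mul]

lemma card_rankIn_le_div_factorial {y : α} (hy : y ∈ s) (k : ℕ) :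
    (#{σ : Perm α | rankIn s σ y ≤ k} : ℝ) / (Fintype.card α).factorial =
      min 1 ((k : ℝ) / #s) := by
  have hs : (0 : ℝ) < #s := by exact_mod_cast card_pos.mpr ⟨y, hy⟩
  have h : (#s : ℝ) * #{σ : Perm α | rankIn s σ y ≤ k} =
      (Fintype.card α).factorial * min k #s := by
    exact_mod_cast card_mul_card_rankIn_le hy k
  push_cast at h
  calc (#{σ : Perm α | rankIn s σ y ≤ k} : ℝ) / (Fintype.card α).factorial
      = min (k : ℝ) #s / #s := by
        rw [div_eq_div_iff (by positivity) hs.ne']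
        linarith
    _ = min 1 ((k : ℝ) / #s) := by
        rw [← min_div_div_right hs.le, div_self hs.ne', min_comm]

end RandomPermutation

lemma sum_Ico_inv_succ_le_log_div {k m : ℕ} (hk : 0 < k) (hkm : k ≤ m) :
    ∑ j ∈ Ico k m, ((j : ℝ) + 1)⁻¹ ≤ Real.log (m / k) := by
  have hk' : (0 : ℝ) < k := by exact_mod_cast hk
  have h := (inv_antitoneOn_Icc_right hk').sum_le_integral_Ico hkm
  rw [integral_inv fun h0 => ?_] at h
  · exact_mod_cast h
  · rw [Set.uIcc_of_le (by exact_mod_cast hkm)] at h0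
    exact h0.1.not_gt hk'

lemma sum_range_min_one_div_le {k m : ℕ} (hk : 0 < k) (hkm : k ≤ m) :
    ∑ j ∈ range m, min 1 ((k : ℝ) / (j + 1)) ≤ k * (1 + Real.log (m / k)) := by
  have head : ∑ j ∈ range k, min 1 ((k : ℝ) / (j + 1)) = k := by
    rw [sum_congr rfl fun j hj => min_eq_left ?_, sum_const, card_range, nsmul_one]
    rw [one_le_div (by positivity)]
    exact_mod_cast mem_range.mp hj
  have tail : ∑ j ∈ Ico k m, min 1 ((k : ℝ) / (j + 1)) =
      k * ∑ j ∈ Ico k m, ((j : ℝ) + 1)⁻¹ := by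
    rw [mul_sum]
    refine sum_congr rfl fun j hj => ?_
    rw [min_eq_right ((div_le_one (by positivity)).mpr ?_), div_eq_mul_inv]
    exact_mod_cast (mem_Ico.mp hj).1.trans (Nat.le_succ j)
  rw [← sum_range_add_sum_Ico _ hkm, head, tail, mul_add, mul_one]
  gcongr
  exact sum_Ico_inv_succ_le_log_div hk hkm

/-- Expected sketch size bound: for a uniformly random
permutation `σ` of `{1,…,m}` and an integer `1 ≤ k ≤ m`, the expected number
of positions `j` such that `σ(j)` is among the `k` smallest values of
`{σ(1),…,σ(j)}` equals `∑_{j=1}^m min {1, k/j}`, and this quantity is at most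
`k·(1 + ln(m/k))`. (Positions are indexed by `Fin m`, so position `j : Fin m`
is the `(j+1)`-st position.) -/
theorem expected_sketch_size_bound
    (m k : ℕ) (hk : 1 ≤ k) (hkm : k ≤ m) :
    (∑ σ : Equiv.Perm (Fin m),
        ((Finset.univ.filter
            (fun j : Fin m =>
              (Finset.univ.filter (fun i : Fin m => i ≤ j ∧ σ i ≤ σ j)).card ≤ k)).card : ℝ))
        / (Nat.factorial m : ℝ)
      = ∑ j ∈ Finset.range m, min 1 ((k : ℝ) / ((j : ℝ) + 1))
    ∧ (∑ j ∈ Finset.range m, min 1 ((k : ℝ) / ((j : ℝ) + 1)))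
        ≤ (k : ℝ) * (1 + Real.log ((m : ℝ) / (k : ℝ))) := by
  have hrank (σ : Perm (Fin m)) (j : Fin m) :
      #{i | i ≤ j ∧ σ i ≤ σ j} = rankIn (Iic j) σ j := by
    rw [rankIn, ← filter_ge_eq_Iic, filter_filter]
  refine ⟨?_, sum_range_min_one_div_le hk hkm⟩
  have hswap : ∑ σ : Perm (Fin m), #{j | rankIn (Iic j) σ j ≤ k}
      = ∑ j, #{σ : Perm (Fin m) | rankIn (Iic j) σ j ≤ k} :=
    sum_card_bipartiteAbove_eq_sum_card_bipartiteBelow _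
  simp_rw [hrank]
  rw [← Nat.cast_sum, hswap, Nat.cast_sum, sum_div, ← Fin.sum_univ_eq_sum_range]
  refine sum_congr rfl fun j _ => ?_
  have h := card_rankIn_le_div_factorial (mem_Iic.mpr (le_refl j)) k
  rw [Fintype.card_fin, Fin.card_Iic] at h
  exact_mod_cast h
end

section
/- The variance of the threshold-based PPS estimator satisfies Var(Y) = ∑_{i : w_i < τ} w_i·(τ − w_i); in particular Var(Y) ≤ τ·W. -/
open MeasureTheory ProbabilityTheory Set Finset

/-! Each light item (`w i < τ`) contributes `τ · 1{r i ≤ w i / τ}`, a scaled Bernoulli variable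
with success probability `p = w i / τ`, hence variance `τ² p (1 - p) = w i (τ - w i)`; heavy items
contribute a constant. Independence of the `r i` makes the variances add. -/

section

variable {Ω : Type*} [MeasurableSpace Ω] {μ : Measure Ω}

lemma variance_indicator_const [IsProbabilityMeasure μ] {A : Set Ω} (hA : MeasurableSet A)
    (c : ℝ) : Var[A.indicator fun _ ↦ c; μ] = c ^ 2 * μ.real A * (1 - μ.real A) := by
  have hsq : (A.indicator fun _ ↦ c) ^ 2 = A.indicator fun _ ↦ c ^ 2 := by
    ext ω
    by_cases h : ω ∈ A <;> simp [h]
  rw [variance_eq_sub (memLp_indicator_const 2 hA c (.inr (measure_ne_top μ A))), hsq,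
    integral_indicator_const _ hA, integral_indicator_const _ hA]
  simp only [smul_eq_mul]
  ring

lemma measureReal_preimage_Iic_of_map_eq_uniform {U : Ω → ℝ} (hU : Measurable U)
    (hunif : μ.map U = volume.restrict (Icc 0 1)) {p : ℝ} (hp₀ : 0 ≤ p) (hp₁ : p ≤ 1) :
    μ.real (U ⁻¹' Iic p) = p := by
  rw [← map_measureReal_apply hU measurableSet_Iic, hunif,
    measureReal_restrict_apply measurableSet_Iic, inter_comm, ← Ici_inter_Iic, inter_assoc,
    Iic_inter_Iic, inf_eq_right.2 hp₁, Ici_inter_Iic, Real.volume_real_Icc]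
  simpa using hp₀

lemma variance_threshold_indicator [IsProbabilityMeasure μ] {U : Ω → ℝ} (hU : Measurable U)
    (hunif : μ.map U = volume.restrict (Icc 0 1)) {w τ : ℝ} (hw : 0 ≤ w) (hτ : 0 < τ)
    (hwτ : w ≤ τ) :
    Var[(Iic (w / τ)).indicator (fun _ ↦ τ) ∘ U; μ] = w * (τ - w) := by
  have hpreimage : (Iic (w / τ)).indicator (fun _ ↦ τ) ∘ U =
      (U ⁻¹' Iic (w / τ)).indicator fun _ ↦ τ :=
    funext fun _ ↦ (indicator_comp_right U).symm
  rw [hpreimage, variance_indicator_const (hU measurableSet_Iic),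
    measureReal_preimage_Iic_of_map_eq_uniform hU hunif (div_nonneg hw hτ.le)
      ((div_le_one hτ).2 hwτ)]
  field_simp

end

lemma mul_card_filter_eq_sum_indicator {ι : Type*} [Fintype ι] (w x : ι → ℝ) (τ : ℝ) :
    τ * (#{i | w i < τ ∧ x i ≤ w i / τ} : ℝ) =
      ∑ i with w i < τ, (Iic (w i / τ)).indicator (fun _ ↦ τ) (x i) := by
  rw [← filter_filter, natCast_card_filter, mul_sum, sum_filter, sum_filter]
  refine sum_congr rfl fun i _ ↦ ?_
  split_ifs <;> simp_all [indicator]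

lemma sum_mul_sub_le_mul_sum {ι : Type*} [Fintype ι] (s : Finset ι) {w : ι → ℝ}
    (hw : ∀ i, 0 ≤ w i) {τ : ℝ} (hτ : 0 ≤ τ) :
    ∑ i ∈ s, w i * (τ - w i) ≤ τ * ∑ i, w i :=
  calc ∑ i ∈ s, w i * (τ - w i)
      ≤ ∑ i ∈ s, τ * w i := sum_le_sum fun i _ ↦ by nlinarith [hw i]
    _ ≤ ∑ i, τ * w i := sum_le_sum_of_subset_of_nonneg (subset_univ s)
          fun i _ _ ↦ mul_nonneg hτ (hw i)
    _ = τ * ∑ i, w i := (mul_sum ..).symm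

/-- The variance of the threshold-based PPS estimator satisfies
`Var(Y) = ∑_{i : w_i < τ} w_i·(τ − w_i)`; in particular `Var(Y) ≤ τ·W`,
where `Y = ∑_{i : w_i ≥ τ} w_i + τ·|{i : w_i < τ ∧ r_i ≤ w_i/τ}|`,
`W = ∑ᵢ w_i`, and `r₁,…,r_m` are i.i.d. uniform on `[0,1]`. -/
theorem pps_estimator_variance
    {Ω : Type*} [MeasurableSpace Ω] (μ : Measure Ω) [IsProbabilityMeasure μ]
    (m : ℕ) (w : Fin m → ℝ) (hw : ∀ i, 0 ≤ w i)
    (τ : ℝ) (hτ : 0 < τ)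
    (r : Fin m → Ω → ℝ)
    (hr_meas : ∀ i, Measurable (r i))
    (hr_indep : ProbabilityTheory.iIndepFun r μ)
    (hr_unif : ∀ i, Measure.map (r i) μ = volume.restrict (Set.Icc (0 : ℝ) 1))
    (Y : Ω → ℝ)
    (hY : ∀ ω, Y ω = (∑ i ∈ Finset.univ.filter (fun i => τ ≤ w i), w i)
        + τ * ((Finset.univ.filter (fun i => w i < τ ∧ r i ω ≤ w i / τ)).card : ℝ)) :
    ProbabilityTheory.variance Y μ
        = ∑ i ∈ Finset.univ.filter (fun i => w i < τ), w i * (τ - w i)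
      ∧ ProbabilityTheory.variance Y μ ≤ τ * ∑ i, w i := by
  set S : Finset (Fin m) := {i | w i < τ}
  set X : Fin m → Ω → ℝ := fun i ↦ (Iic (w i / τ)).indicator (fun _ ↦ τ) ∘ r i
  have hg_meas : ∀ i, Measurable ((Iic (w i / τ)).indicator fun _ ↦ τ) :=
    fun _ ↦ measurable_const.indicator measurableSet_Iic
  have hX_memLp : ∀ i, MemLp (X i) 2 μ := fun i ↦
    .of_bound ((hg_meas i).comp (hr_meas i)).aestronglyMeasurable ‖τ‖
      (ae_of_all _ fun _ ↦ norm_indicator_le_norm_self _ _)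
  have hY_eq : Y = fun ω ↦ (∑ i with τ ≤ w i, w i) + (∑ i ∈ S, X i) ω := by
    ext ω
    rw [hY, mul_card_filter_eq_sum_indicator, Finset.sum_apply]
    rfl
  have hvar : Var[Y; μ] = ∑ i ∈ S, w i * (τ - w i) := by
    rw [hY_eq, variance_const_add (memLp_finsetSum' S fun i _ ↦ hX_memLp i).1,
      IndepFun.variance_sum (fun i _ ↦ hX_memLp i)
        fun i _ j _ hij ↦ (hr_indep.indepFun hij).comp (hg_meas i) (hg_meas j)]
    exact sum_congr rfl fun i hi ↦ variance_threshold_indicator (hr_meas i) (hr_unif i) (hw i) hτ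
      (mem_filter.1 hi).2.le
  exact ⟨hvar, hvar ▸ sum_mul_sub_le_mul_sum S hw hτ.le⟩
end

section
/- Coefficient-of-variation bound for the PPS estimator: if W ≥ k·τ for a real k > 0, then Var(Y) ≤ W²/k, i.e., the coefficient of variation √Var(Y)/W is at most 1/√k. -/
/-!
Writing `Y = C + ∑_{w_i < τ} τ·1[r_i ≤ w_i/τ]`, the summands are independent and each has
variance at most its second moment `τ²·(w_i/τ) = τ·w_i`. Hence `Var Y ≤ τ·W ≤ W²/k`, the last
step because `kτ ≤ W`.
-/

open MeasureTheory ProbabilityTheory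

lemma variance_indicator_const_le {Ω : Type*} [MeasurableSpace Ω] (μ : Measure Ω)
    [IsProbabilityMeasure μ] {A : Set Ω} (hA : MeasurableSet A) (c : ℝ) :
    Var[A.indicator fun _ ↦ c; μ] ≤ c ^ 2 * μ.real A := by
  have hsq : (A.indicator fun _ ↦ c) ^ 2 = A.indicator fun _ ↦ c ^ 2 := by
    funext x; by_cases hx : x ∈ A <;> simp [hx]
  calc Var[A.indicator fun _ ↦ c; μ]
      ≤ μ[(A.indicator fun _ ↦ c) ^ 2] :=
        variance_le_expectation_sq (aestronglyMeasurable_const.indicator hA)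
    _ = c ^ 2 * μ.real A := by
        rw [hsq, integral_indicator_const _ hA, smul_eq_mul, mul_comm]

lemma measureReal_uniform_Iic {p : ℝ} (hp0 : 0 ≤ p) (hp1 : p ≤ 1) :
    (volume.restrict (Set.Icc (0 : ℝ) 1)).real (Set.Iic p) = p := by
  have : Set.Iic p ∩ Set.Icc 0 1 = Set.Icc 0 p := by
    ext x; simp only [Set.mem_inter_iff, Set.mem_Iic, Set.mem_Icc]; constructor <;> grind
  rw [measureReal_restrict_apply measurableSet_Iic, this, Real.volume_real_Icc_of_le hp0, sub_zero]

lemma aemeasurable_of_map_eq_uniform {Ω : Type*} [MeasurableSpace Ω] {μ : Measure Ω}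
    {X : Ω → ℝ} (hX : μ.map X = volume.restrict (Set.Icc (0 : ℝ) 1)) : AEMeasurable X μ :=
  AEMeasurable.of_map_ne_zero (by simp [hX])

lemma variance_sum_indicator_Iic_uniform_le {Ω ι : Type*} [MeasurableSpace Ω] (μ : Measure Ω)
    [IsProbabilityMeasure μ] {r : ι → Ω → ℝ} (hr_indep : iIndepFun r μ)
    (hr_unif : ∀ i, μ.map (r i) = volume.restrict (Set.Icc (0 : ℝ) 1))
    (s : Finset ι) {p : ι → ℝ} (hp0 : ∀ i ∈ s, 0 ≤ p i) (hp1 : ∀ i ∈ s, p i ≤ 1) (c : ℝ) :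
    Var[fun ω ↦ ∑ i ∈ s, (Set.Iic (p i)).indicator (fun _ ↦ c) (r i ω); μ]
      ≤ c ^ 2 * ∑ i ∈ s, p i := by
  have : IsProbabilityMeasure (volume.restrict (Set.Icc (0 : ℝ) 1)) := ⟨by simp⟩
  set g : ι → ℝ → ℝ := fun i ↦ (Set.Iic (p i)).indicator fun _ ↦ c
  have hg : ∀ i, Measurable (g i) := fun i ↦ measurable_const.indicator measurableSet_Iic
  have hr : ∀ i, AEMeasurable (r i) μ := fun i ↦ aemeasurable_of_map_eq_uniform (hr_unif i)
  have hmemLp : ∀ i ∈ s, MemLp (g i ∘ r i) 2 μ := fun i _ ↦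
    .of_bound ((hg i).comp_aemeasurable (hr i)).aestronglyMeasurable ‖c‖
      (.of_forall fun _ ↦ norm_indicator_le_norm_self (fun _ ↦ c) _)
  have hindep : Set.Pairwise ↑s fun i j ↦ (g i ∘ r i) ⟂ᵢ[μ] (g j ∘ r j) :=
    fun i _ j _ hij ↦ (hr_indep.comp g hg).indepFun hij
  rw [show (fun ω ↦ ∑ i ∈ s, g i (r i ω)) = ∑ i ∈ s, g i ∘ r i from (Finset.sum_fn ..).symm]
  calc Var[∑ i ∈ s, g i ∘ r i; μ]
      = ∑ i ∈ s, Var[g i; volume.restrict (Set.Icc (0 : ℝ) 1)] := by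
        rw [IndepFun.variance_sum hmemLp hindep]
        refine Finset.sum_congr rfl fun i _ ↦ ?_
        rw [← hr_unif i, variance_map (hr_unif i ▸ (hg i).aemeasurable) (hr i)]
    _ ≤ ∑ i ∈ s, c ^ 2 * p i := Finset.sum_le_sum fun i hi ↦ by
        simpa only [measureReal_uniform_Iic (hp0 i hi) (hp1 i hi)] using
          variance_indicator_const_le (volume.restrict (Set.Icc (0 : ℝ) 1))
            (measurableSet_Iic (a := p i)) c
    _ = c ^ 2 * ∑ i ∈ s, p i := (Finset.mul_sum ..).symm

lemma mul_card_filter_le_eq_sum_indicator {ι : Type*} (s : Finset ι) (P : ι → Prop)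
    [DecidablePred P] (r p : ι → ℝ) (c : ℝ) :
    c * ((s.filter fun i ↦ P i ∧ r i ≤ p i).card : ℝ)
      = ∑ i ∈ s.filter P, (Set.Iic (p i)).indicator (fun _ ↦ c) (r i) := by
  simp only [← Finset.filter_filter, Set.indicator_apply, Set.mem_Iic, ← Finset.sum_filter,
    Finset.sum_const, nsmul_eq_mul, mul_comm]

lemma sqrt_div_le_one_div_sqrt_of_le_sq_div {v W k : ℝ} (h : v ≤ W ^ 2 / k) (hW : 0 < W)
    (hk : 0 < k) : √v / W ≤ 1 / √k := by
  rw [div_le_div_iff₀ hW (Real.sqrt_pos.2 hk), one_mul, ← Real.sqrt_mul' v hk.le,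
    ← Real.sqrt_sq hW.le]
  exact Real.sqrt_le_sqrt ((le_div_iff₀ hk).1 h)

theorem pps_estimator_cv_bound_general
    {Ω : Type*} [MeasurableSpace Ω] (μ : Measure Ω) [IsProbabilityMeasure μ]
    (m : ℕ) (w : Fin m → ℝ) (hw : ∀ i, 0 ≤ w i)
    (τ : ℝ) (hτ : 0 < τ)
    (r : Fin m → Ω → ℝ)
    (hr_indep : ProbabilityTheory.iIndepFun r μ)
    (hr_unif : ∀ i, Measure.map (r i) μ = volume.restrict (Set.Icc (0 : ℝ) 1))
    (Y : Ω → ℝ)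
    (hY : ∀ ω, Y ω = (∑ i ∈ Finset.univ.filter (fun i => τ ≤ w i), w i)
        + τ * ((Finset.univ.filter (fun i => w i < τ ∧ r i ω ≤ w i / τ)).card : ℝ))
    (k : ℝ) (hk : 0 < k) (hW : k * τ ≤ ∑ i, w i) :
    ProbabilityTheory.variance Y μ ≤ (∑ i, w i) ^ 2 / k
      ∧ Real.sqrt (ProbabilityTheory.variance Y μ) / (∑ i, w i)
          ≤ 1 / Real.sqrt k := by
  set W := ∑ i, w i
  set S := Finset.univ.filter fun i ↦ w i < τ
  have hWpos : 0 < W := lt_of_lt_of_le (by positivity) hW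
  have hY_sum : Y = fun ω ↦ (∑ i ∈ Finset.univ.filter (fun i ↦ τ ≤ w i), w i)
      + ∑ i ∈ S, (Set.Iic (w i / τ)).indicator (fun _ ↦ τ) (r i ω) :=
    funext fun ω ↦ by rw [hY, mul_card_filter_le_eq_sum_indicator]
  have hvar : Var[Y; μ] ≤ τ * W := by
    have hsum_meas : AEMeasurable
        (fun ω ↦ ∑ i ∈ S, (Set.Iic (w i / τ)).indicator (fun _ ↦ τ) (r i ω)) μ :=
      S.aemeasurable_fun_sum fun i _ ↦
        (measurable_const.indicator measurableSet_Iic).comp_aemeasurable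
        (aemeasurable_of_map_eq_uniform (hr_unif i))
    rw [hY_sum, variance_const_add hsum_meas.aestronglyMeasurable]
    calc _ ≤ τ ^ 2 * ∑ i ∈ S, w i / τ :=
          variance_sum_indicator_Iic_uniform_le μ hr_indep hr_unif S
            (fun i _ ↦ div_nonneg (hw i) hτ.le)
            (fun i hi ↦ (div_le_one hτ).2 (Finset.mem_filter.1 hi).2.le) τ
      _ = τ * ∑ i ∈ S, w i := by rw [← Finset.sum_div]; field_simp
      _ ≤ τ * W := by
          gcongr
          exact Finset.sum_le_sum_of_subset_of_nonneg (Finset.filter_subset _ _)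
            fun i _ _ ↦ hw i
  have hvar_le : Var[Y; μ] ≤ W ^ 2 / k :=
    hvar.trans ((le_div_iff₀ hk).2 (by nlinarith))
  exact ⟨hvar_le, sqrt_div_le_one_div_sqrt_of_le_sq_div hvar_le hWpos hk⟩

/-- Coefficient-of-variation bound for the PPS estimator:
if `W ≥ k·τ` for a real `k > 0`, then `Var(Y) ≤ W²/k`, i.e., the coefficient
of variation `√Var(Y)/W` is at most `1/√k`. Here
`Y = ∑_{i : w_i ≥ τ} w_i + τ·|{i : w_i < τ ∧ r_i ≤ w_i/τ}|`, `W = ∑ᵢ w_i`,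
and `r₁,…,r_m` are i.i.d. uniform on `[0,1]`. -/
theorem pps_estimator_cv_bound
    {Ω : Type*} [MeasurableSpace Ω] (μ : Measure Ω) [IsProbabilityMeasure μ]
    (m : ℕ) (w : Fin m → ℝ) (hw : ∀ i, 0 ≤ w i)
    (τ : ℝ) (hτ : 0 < τ)
    (r : Fin m → Ω → ℝ)
    (hr_meas : ∀ i, Measurable (r i))
    (hr_indep : ProbabilityTheory.iIndepFun r μ)
    (hr_unif : ∀ i, Measure.map (r i) μ = volume.restrict (Set.Icc (0 : ℝ) 1))
    (Y : Ω → ℝ)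
    (hY : ∀ ω, Y ω = (∑ i ∈ Finset.univ.filter (fun i => τ ≤ w i), w i)
        + τ * ((Finset.univ.filter (fun i => w i < τ ∧ r i ω ≤ w i / τ)).card : ℝ))
    (k : ℝ) (hk : 0 < k) (hW : k * τ ≤ ∑ i, w i) :
    ProbabilityTheory.variance Y μ ≤ (∑ i, w i) ^ 2 / k
      ∧ Real.sqrt (ProbabilityTheory.variance Y μ) / (∑ i, w i)
          ≤ 1 / Real.sqrt k :=
  pps_estimator_cv_bound_general μ m w hw τ hτ r hr_indep hr_unif Y hY k hk hW
end

section
/- The HIP (historic inverse probability) estimator is unbiased: E[Ŷ] = ∑_{j=1}^m α_j. -/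
/-!
By linearity of expectation it suffices to treat one item `j`. Its threshold `τ_j` is a function
of the ranks of the items before `j` only, hence independent of `r_j`, and it lies in `(0, 1]`
almost surely. So, given `τ_j`, item `j` is sampled with probability exactly `τ_j`, and its
contribution `α_j / τ_j` has mean `α_j`: by independence the joint law of `(τ_j, r_j)` is a product
measure, and Fubini applies.
-/

open MeasureTheory ProbabilityTheory Finset

section KthSmallest

variable {ι : Type*} [Fintype ι] {k : ℕ}

noncomputable def kthSmallest (k : ℕ) (x : ι → ℝ) : ℝ :=
  sInf {t : ℝ | k ≤ #{i | x i ≤ t}}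

lemma isClosed_setOf_le_card_filter_le (k : ℕ) (x : ι → ℝ) :
    IsClosed {t : ℝ | k ≤ #{i | x i ≤ t}} := by
  classical
  have h : {t : ℝ | k ≤ #{i | x i ≤ t}} = ⋃ s ∈ powersetCard k univ, ⋂ i ∈ s, Set.Ici (x i) := by
    ext t
    simp only [Set.mem_ofPred_eq, Set.mem_iUnion, Set.mem_iInter, Set.mem_Ici, mem_powersetCard,
      subset_univ, true_and, exists_prop]
    constructor
    · intro ht
      obtain ⟨s, hs, hcard⟩ := exists_subset_card_eq ht
      exact ⟨s, hcard, fun i hi => (mem_filter.mp (hs hi)).2⟩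
    · rintro ⟨s, rfl, hs⟩
      exact card_le_card fun i hi => mem_filter.mpr ⟨mem_univ i, hs i hi⟩
  rw [h]
  exact isClosed_biUnion_finset fun s _ => isClosed_biInter fun i _ => isClosed_Ici

lemma kthSmallest_le_iff (hk : 1 ≤ k) (hkι : k ≤ Fintype.card ι) (x : ι → ℝ) (a : ℝ) :
    kthSmallest k x ≤ a ↔ k ≤ #{i | x i ≤ a} := by
  set S := {t : ℝ | k ≤ #{i | x i ≤ t}}
  have hS_upper : ∀ ⦃s t⦄, s ≤ t → s ∈ S → t ∈ S := fun s t hst hs =>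
    hs.trans (card_le_card (monotone_filter_right _ fun i _ hi => hi.trans hst))
  have hS_ne : S.Nonempty := by
    obtain ⟨b, hb⟩ := Finite.bddAbove_range x
    refine ⟨b, hkι.trans_eq ?_⟩
    rw [filter_true_of_mem fun i _ => hb (Set.mem_range_self i), card_univ]
  have hS_bdd : BddBelow S := by
    obtain ⟨b, hb⟩ := Finite.bddBelow_range x
    refine ⟨b, fun t ht => ?_⟩
    obtain ⟨i, hi⟩ := card_pos.mp (hk.trans ht)
    exact (hb (Set.mem_range_self i)).trans (mem_filter.mp hi).2
  refine ⟨fun h => hS_upper h ?_, fun h => csInf_le hS_bdd h⟩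
  exact (isClosed_setOf_le_card_filter_le k x).csInf_mem hS_ne hS_bdd

lemma kthSmallest_mem_Ioc (hk : 1 ≤ k) (hkι : k ≤ Fintype.card ι) {x : ι → ℝ} {a b : ℝ}
    (hx : ∀ i, x i ∈ Set.Ioc a b) : kthSmallest k x ∈ Set.Ioc a b := by
  rw [Set.mem_Ioc, ← not_le, kthSmallest_le_iff hk hkι, kthSmallest_le_iff hk hkι,
    filter_false_of_mem fun i _ => not_le.mpr (hx i).1,
    filter_true_of_mem fun i _ => (hx i).2, card_empty, card_univ]
  omega

lemma measurable_kthSmallest (hk : 1 ≤ k) (hkι : k ≤ Fintype.card ι) :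
    Measurable (kthSmallest k : (ι → ℝ) → ℝ) := by
  refine measurable_of_Iic fun a => ?_
  have h : kthSmallest k ⁻¹' Set.Iic a = {x : ι → ℝ | k ≤ ∑ i, if x i ≤ a then 1 else 0} := by
    ext x
    simp only [Set.mem_preimage, Set.mem_Iic, kthSmallest_le_iff hk hkι, Set.mem_ofPred_eq,
      card_filter]
  rw [h]
  refine measurableSet_le measurable_const (Finset.measurable_sum _ fun i _ => ?_)
  exact Measurable.ite (measurableSet_le (measurable_pi_apply i) measurable_const)
    measurable_const measurable_const

end KthSmallest

section InverseProbabilityWeighting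

/-- The contribution of an item with threshold `p.1` and rank `p.2` to the estimator. -/
noncomputable def inverseProbWeighted (c : ℝ) (p : ℝ × ℝ) : ℝ :=
  if p.2 < p.1 then c / p.1 else 0

variable {c : ℝ}

lemma measurable_inverseProbWeighted (c : ℝ) : Measurable (inverseProbWeighted c) :=
  Measurable.ite (measurableSet_lt measurable_snd measurable_fst)
    (measurable_const.div measurable_fst) measurable_const

lemma inverseProbWeighted_section {y : ℝ} :
    (fun u => inverseProbWeighted c (y, u)) = (Set.Iio y).indicator fun _ => c / y := by
  ext u
  simp [inverseProbWeighted, Set.indicator]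

lemma norm_inverseProbWeighted {y : ℝ} (hy : 0 < y) (u : ℝ) :
    ‖inverseProbWeighted c (y, u)‖ = inverseProbWeighted |c| (y, u) := by
  unfold inverseProbWeighted
  split_ifs <;> simp [abs_of_pos hy]

lemma integral_inverseProbWeighted_uniform {y : ℝ} (hy : y ∈ Set.Ioc 0 1) :
    ∫ u, inverseProbWeighted c (y, u) ∂(volume.restrict (Set.Icc (0 : ℝ) 1)) = c := by
  have hIio : Set.Iio y ∩ Set.Icc 0 1 = Set.Ico 0 y := by
    ext u
    simp only [Set.mem_inter_iff, Set.mem_Iio, Set.mem_Icc, Set.mem_Ico]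
    constructor
    · rintro ⟨hu, h0, -⟩
      exact ⟨h0, hu⟩
    · rintro ⟨h0, hu⟩
      exact ⟨hu, h0, hu.le.trans hy.2⟩
  rw [inverseProbWeighted_section, integral_indicator_const _ measurableSet_Iio,
    measureReal_restrict_apply measurableSet_Iio, hIio, Real.volume_real_Ico_of_le hy.1.le,
    sub_zero, smul_eq_mul, mul_div_cancel₀ _ hy.1.ne']

variable {ν : Measure ℝ}

lemma integrable_inverseProbWeighted_prod_uniform [IsFiniteMeasure ν]
    (hν : ∀ᵐ y ∂ν, y ∈ Set.Ioc 0 1) :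
    Integrable (inverseProbWeighted c) (ν.prod (volume.restrict (Set.Icc (0 : ℝ) 1))) := by
  rw [integrable_prod_iff (measurable_inverseProbWeighted c).aestronglyMeasurable]
  refine ⟨Filter.Eventually.of_forall fun y => ?_, (integrable_const |c|).congr ?_⟩
  · rw [inverseProbWeighted_section]
    exact (integrable_const _).indicator measurableSet_Iio
  · filter_upwards [hν] with y hy
    simp_rw [norm_inverseProbWeighted hy.1]
    exact (integral_inverseProbWeighted_uniform hy).symm

lemma integral_inverseProbWeighted_prod_uniform [IsProbabilityMeasure ν]
    (hν : ∀ᵐ y ∂ν, y ∈ Set.Ioc 0 1) :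
    ∫ p, inverseProbWeighted c p ∂(ν.prod (volume.restrict (Set.Icc (0 : ℝ) 1))) = c := by
  rw [integral_prod _ (integrable_inverseProbWeighted_prod_uniform hν)]
  calc ∫ y, ∫ u, inverseProbWeighted c (y, u) ∂(volume.restrict (Set.Icc (0 : ℝ) 1)) ∂ν
      = ∫ _, c ∂ν := integral_congr_ae <| by
        filter_upwards [hν] with y hy using integral_inverseProbWeighted_uniform hy
    _ = c := by simp

variable {Ω : Type*} [MeasurableSpace Ω] {μ : Measure Ω} {X U : Ω → ℝ}

lemma ae_mem_Ioc_of_map_eq_uniform (hU : AEMeasurable U μ)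
    (hU_unif : μ.map U = volume.restrict (Set.Icc (0 : ℝ) 1)) : ∀ᵐ ω ∂μ, U ω ∈ Set.Ioc 0 1 := by
  refine (ae_map_iff hU measurableSet_Ioc).mp ?_
  rw [hU_unif, Measure.restrict_congr_set Ioc_ae_eq_Icc.symm]
  exact ae_restrict_mem measurableSet_Ioc

lemma integrable_inverseProbWeighted_of_indepFun [IsFiniteMeasure μ] (hX : AEMeasurable X μ)
    (hU : AEMeasurable U μ) (hXU : IndepFun X U μ)
    (hU_unif : μ.map U = volume.restrict (Set.Icc (0 : ℝ) 1))
    (hX_mem : ∀ᵐ ω ∂μ, X ω ∈ Set.Ioc 0 1) :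
    Integrable (fun ω => inverseProbWeighted c (X ω, U ω)) μ := by
  refine (integrable_map_measure (measurable_inverseProbWeighted c).aestronglyMeasurable
    (hX.prodMk hU)).mp ?_
  rw [(indepFun_iff_map_prod_eq_prod_map_map hX hU).mp hXU, hU_unif]
  exact integrable_inverseProbWeighted_prod_uniform ((ae_map_iff hX measurableSet_Ioc).mpr hX_mem)

theorem integral_inverseProbWeighted_of_indepFun [IsProbabilityMeasure μ] (hX : AEMeasurable X μ)
    (hU : AEMeasurable U μ) (hXU : IndepFun X U μ)
    (hU_unif : μ.map U = volume.restrict (Set.Icc (0 : ℝ) 1))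
    (hX_mem : ∀ᵐ ω ∂μ, X ω ∈ Set.Ioc 0 1) :
    ∫ ω, inverseProbWeighted c (X ω, U ω) ∂μ = c := by
  have : IsProbabilityMeasure (μ.map X) := Measure.isProbabilityMeasure_map hX
  rw [← integral_map (hX.prodMk hU) (measurable_inverseProbWeighted c).aestronglyMeasurable,
    (indepFun_iff_map_prod_eq_prod_map_map hX hU).mp hXU, hU_unif]
  exact integral_inverseProbWeighted_prod_uniform ((ae_map_iff hX measurableSet_Ioc).mpr hX_mem)

end InverseProbabilityWeighting

section HIPThreshold

variable {m : ℕ} {k : ℕ}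

noncomputable def hipThreshold (k : ℕ) (j : Fin m) (y : Iio j → ℝ) : ℝ :=
  if k ≤ (j : ℕ) then kthSmallest k y else 1

lemma hipThreshold_restrict_Iio (j : Fin m) (x : Fin m → ℝ) :
    hipThreshold k j (fun i => x i) = if k ≤ (j : ℕ)
      then sInf {t : ℝ | k ≤ (univ.filter (fun i : Fin m => i < j ∧ x i ≤ t)).card} else 1 := by
  have hcard : ∀ t : ℝ, #{i : Iio j | x i ≤ t} = #{i : Fin m | i < j ∧ x i ≤ t} := fun t => by
    rw [← Fintype.card_subtype, ← Fintype.card_subtype]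
    exact Fintype.card_congr <| (Equiv.subtypeSubtypeEquivSubtypeInter (· ∈ Iio j) (x · ≤ t)).trans
      (Equiv.subtypeEquivRight fun i => by rw [mem_Iio])
  simp only [hipThreshold, kthSmallest, hcard]

lemma card_coe_Iio (j : Fin m) : Fintype.card (Iio j) = j := by
  rw [Fintype.card_coe, Fin.card_Iio]

lemma measurable_hipThreshold (hk : 1 ≤ k) (j : Fin m) : Measurable (hipThreshold k j) := by
  unfold hipThreshold
  split_ifs with hkj
  · exact measurable_kthSmallest hk (hkj.trans_eq (card_coe_Iio j).symm)
  · exact measurable_const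

lemma hipThreshold_mem_Ioc (hk : 1 ≤ k) (j : Fin m) {y : Iio j → ℝ}
    (hy : ∀ i, y i ∈ Set.Ioc 0 1) : hipThreshold k j y ∈ Set.Ioc 0 1 := by
  unfold hipThreshold
  split_ifs with hkj
  · exact kthSmallest_mem_Ioc hk (hkj.trans_eq (card_coe_Iio j).symm) hy
  · exact ⟨zero_lt_one, le_rfl⟩

end HIPThreshold

theorem hip_estimator_unbiased_general
    {Ω : Type*} [MeasurableSpace Ω] (μ : Measure Ω) [IsProbabilityMeasure μ]
    (m : ℕ) (α : Fin m → ℝ)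
    (k : ℕ) (hk : 1 ≤ k)
    (r : Fin m → Ω → ℝ)
    (hr_meas : ∀ i, Measurable (r i))
    (hr_indep : ProbabilityTheory.iIndepFun r μ)
    (hr_unif : ∀ i, Measure.map (r i) μ = volume.restrict (Set.Icc (0 : ℝ) 1))
    (τ : Fin m → Ω → ℝ)
    (hτ : ∀ (j : Fin m) (ω : Ω),
      τ j ω = if k ≤ (j : ℕ)
        then sInf {t : ℝ |
          k ≤ (Finset.univ.filter (fun i : Fin m => i < j ∧ r i ω ≤ t)).card}
        else 1)
    (Yhat : Ω → ℝ)
    (hYhat : ∀ ω, Yhat ω = ∑ j : Fin m,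
      if r j ω < τ j ω then α j / τ j ω else 0) :
    ∫ ω, Yhat ω ∂μ = ∑ j : Fin m, α j := by
  have hr_mem : ∀ᵐ ω ∂μ, ∀ i, r i ω ∈ Set.Ioc 0 1 :=
    ae_all_iff.mpr fun i => ae_mem_Ioc_of_map_eq_uniform (hr_meas i).aemeasurable (hr_unif i)
  have hτ_eq (j : Fin m) : τ j = hipThreshold k j ∘ fun ω (i : Iio j) => r i ω :=
    funext fun ω => (hτ j ω).trans (hipThreshold_restrict_Iio j fun i => r i ω).symm
  have hτ_meas (j : Fin m) : Measurable (τ j) := by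
    rw [hτ_eq j]
    exact (measurable_hipThreshold hk j).comp (measurable_pi_lambda _ fun i => hr_meas i)
  have hτ_indep (j : Fin m) : IndepFun (τ j) (r j) μ := by
    rw [hτ_eq j]
    exact (hr_indep.indepFun_finset (Iio j) {j} (by simp) hr_meas).comp
      (measurable_hipThreshold hk j) (measurable_pi_apply ⟨j, mem_singleton_self j⟩)
  have hτ_mem (j : Fin m) : ∀ᵐ ω ∂μ, τ j ω ∈ Set.Ioc 0 1 := by
    filter_upwards [hr_mem] with ω hω
    rw [hτ_eq j]
    exact hipThreshold_mem_Ioc hk j fun i => hω i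
  calc ∫ ω, Yhat ω ∂μ = ∫ ω, ∑ j, inverseProbWeighted (α j) (τ j ω, r j ω) ∂μ := by
        simp_rw [hYhat]
        rfl
    _ = ∑ j, ∫ ω, inverseProbWeighted (α j) (τ j ω, r j ω) ∂μ :=
        integral_finsetSum _ fun j _ => integrable_inverseProbWeighted_of_indepFun
          (hτ_meas j).aemeasurable (hr_meas j).aemeasurable (hτ_indep j) (hr_unif j) (hτ_mem j)
    _ = ∑ j, α j :=
        sum_congr rfl fun j _ => integral_inverseProbWeighted_of_indepFun
          (hτ_meas j).aemeasurable (hr_meas j).aemeasurable (hτ_indep j) (hr_unif j) (hτ_mem j)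

/-- The HIP (historic inverse probability) estimator is
unbiased: `E[Ŷ] = ∑_{j=1}^m α_j`. Items are indexed by `Fin m` (ordered by
increasing distance), `r₁,…,r_m` are i.i.d. uniform on `[0,1]`, the HIP
threshold `τ_j` is the `k`-th smallest value among the ranks of the `j`
preceding items if there are at least `k` of them and `1` otherwise (here the
`k`-th smallest of a finite family is expressed as the infimum of all `t` such
that at least `k` of the values are `≤ t`), item `j` is sampled if
`r_j < τ_j`, and `Ŷ = ∑_{j sampled} α_j / τ_j`. -/
theorem hip_estimator_unbiased
    {Ω : Type*} [MeasurableSpace Ω] (μ : Measure Ω) [IsProbabilityMeasure μ]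
    (m : ℕ) (α : Fin m → ℝ) (hα : ∀ j, 0 ≤ α j)
    (k : ℕ) (hk : 1 ≤ k)
    (r : Fin m → Ω → ℝ)
    (hr_meas : ∀ i, Measurable (r i))
    (hr_indep : ProbabilityTheory.iIndepFun r μ)
    (hr_unif : ∀ i, Measure.map (r i) μ = volume.restrict (Set.Icc (0 : ℝ) 1))
    (τ : Fin m → Ω → ℝ)
    (hτ : ∀ (j : Fin m) (ω : Ω),
      τ j ω = if k ≤ (j : ℕ)
        then sInf {t : ℝ |
          k ≤ (Finset.univ.filter (fun i : Fin m => i < j ∧ r i ω ≤ t)).card}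
        else 1)
    (Yhat : Ω → ℝ)
    (hYhat : ∀ ω, Yhat ω = ∑ j : Fin m,
      if r j ω < τ j ω then α j / τ j ω else 0) :
    ∫ ω, Yhat ω ∂μ = ∑ j : Fin m, α j :=
  hip_estimator_unbiased_general μ m α k hk r hr_meas hr_indep hr_unif τ hτ Yhat hYhat
end
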